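/- arXiv:2603.22801 — 2 statements merged into one kernel-verified Lean document; each statement's English description precedes it below -/
import Mathlib

section
/- Let x₁ ~ N(0, a) and x₂ ~ N(0, b) be independent centered Gaussians with a, b > 0, and σ the ReLU function. Then E[(x₁+x₂)·σ(x₁)·σ'(x₁+x₂)] = a/4 + (a/(2π))·arctan(√(a/b)) + √(ab)/(2π). -/
/-!
Rescale both coordinates to standard Gaussians: the integrand `F` becomes
`f (u, v) = F (√a u, √b v)`, which is positively homogeneous of degree two. In polar coordinates
the standard Gaussian density is radial, so the expectation factors as
`(1 / 2π) ∫ r³ e^{-r²/2} dr · ∫ f (cos θ, sin θ) dθ`, and the radial integral is `2`.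
On the circle the indicator cuts out the sector `-arctan √(a/b) ≤ θ ≤ π/2`, where the integrand
is the trigonometric polynomial `a cos² θ + √(ab) sin θ cos θ`.
-/

open MeasureTheory ProbabilityTheory Real Set
open scoped NNReal

section GaussianPolar

variable {E : Type*} [NormedAddCommGroup E] [NormedSpace ℝ E]

lemma gaussianReal_map_sqrt_mul (v : ℝ≥0) :
    (gaussianReal 0 1).map (√(v : ℝ) * ·) = gaussianReal 0 v := by
  rw [gaussianReal_map_const_mul, mul_zero, mul_one]
  congr
  exact sq_sqrt v.2

lemma integral_gaussianReal_prod_eq_integral_sqrt_mul {a b : ℝ≥0} (ha : a ≠ 0) (hb : b ≠ 0)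
    (f : ℝ × ℝ → E) :
    ∫ p, f p ∂((gaussianReal 0 a).prod (gaussianReal 0 b)) =
      ∫ p, f (√(a : ℝ) * p.1, √(b : ℝ) * p.2) ∂((gaussianReal 0 1).prod (gaussianReal 0 1)) := by
  have emb : ∀ v : ℝ≥0, v ≠ 0 → MeasurableEmbedding (√(v : ℝ) * ·) := fun v hv =>
    (Homeomorph.mulLeft₀ _ (by positivity)).measurableEmbedding
  rw [← gaussianReal_map_sqrt_mul a, ← gaussianReal_map_sqrt_mul b, Measure.map_prod_map _ _
    (emb a ha).measurable (emb b hb).measurable, ((emb a ha).prodMap (emb b hb)).integral_map]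
  rfl

lemma integral_gaussianReal_one_prod_eq_integral_density (f : ℝ × ℝ → E) :
    ∫ p, f p ∂((gaussianReal 0 1).prod (gaussianReal 0 1)) =
      ∫ p, ((2 * π)⁻¹ * exp (-(p.1 ^ 2 + p.2 ^ 2) / 2)) • f p := by
  rw [gaussianReal_of_var_ne_zero 0 one_ne_zero, prod_withDensity (measurable_gaussianPDF 0 1)
    (measurable_gaussianPDF 0 1), integral_withDensity_eq_integral_toReal_smul (by fun_prop)
      (ae_of_all _ fun _ => ENNReal.mul_lt_top gaussianPDF_lt_top gaussianPDF_lt_top),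
    ← Measure.volume_eq_prod]
  congr with p
  congr 1
  rw [ENNReal.toReal_mul, toReal_gaussianPDF, toReal_gaussianPDF, gaussianPDFReal, gaussianPDFReal,
    mul_mul_mul_comm, ← exp_add, ← mul_inv, ← sqrt_mul (by positivity),
    sqrt_mul_self (by positivity)]
  push_cast
  ring_nf

lemma integral_Ioi_pow_three_mul_exp_neg_sq_div_two :
    ∫ r in Ioi (0 : ℝ), r ^ 3 * exp (-(r ^ 2) / 2) = 2 := by
  convert integral_rpow_mul_exp_neg_mul_rpow (p := 2) (q := 3) (b := 1 / 2) (by norm_num)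
    (by norm_num) (by norm_num) using 1
  · refine setIntegral_congr_fun measurableSet_Ioi fun r _ => ?_
    norm_cast
    ring_nf
  · norm_num [Real.Gamma_two]

lemma integral_gaussian_density_smul_of_homogeneous {f : ℝ × ℝ → ℝ}
    (hf : ∀ r : ℝ, 0 < r → ∀ p, f (r • p) = r ^ 2 * f p) :
    ∫ p, ((2 * π)⁻¹ * exp (-(p.1 ^ 2 + p.2 ^ 2) / 2)) • f p =
      π⁻¹ * ∫ θ in -π..π, f (cos θ, sin θ) := by
  have polar : ∀ p ∈ Ioi (0 : ℝ) ×ˢ Ioo (-π) π,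
      p.1 • ((2 * π)⁻¹ * exp (-((polarCoord.symm p).1 ^ 2 + (polarCoord.symm p).2 ^ 2) / 2)) •
        f (polarCoord.symm p) =
        p.1 ^ 3 * exp (-(p.1 ^ 2) / 2) * ((2 * π)⁻¹ * f (cos p.2, sin p.2)) := by
    rintro ⟨r, θ⟩ ⟨hr, -⟩
    have hsq : (r * cos θ) ^ 2 + (r * sin θ) ^ 2 = r ^ 2 := by
      linear_combination r ^ 2 * cos_sq_add_sin_sq θ
    have hsmul : (r * cos θ, r * sin θ) = r • (cos θ, sin θ) := by simp
    simp only [polarCoord_symm_apply, smul_eq_mul]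
    rw [hsq, hsmul, hf r hr]
    ring
  rw [← integral_comp_polarCoord_symm, polarCoord_target,
    setIntegral_congr_fun (measurableSet_Ioi.prod measurableSet_Ioo) polar, Measure.volume_eq_prod,
    ← Measure.prod_restrict, integral_prod_mul (fun r ↦ r ^ 3 * exp (-(r ^ 2) / 2))
      (fun θ ↦ (2 * π)⁻¹ * f (cos θ, sin θ)),
    integral_Ioi_pow_three_mul_exp_neg_sq_div_two, integral_const_mul,
    intervalIntegral.integral_of_le (by linarith [pi_pos]), integral_Ioc_eq_integral_Ioo]
  field_simp

theorem integral_gaussianReal_prod_of_homogeneous {a b : ℝ≥0} (ha : a ≠ 0) (hb : b ≠ 0)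
    {f : ℝ × ℝ → ℝ} (hf : ∀ r : ℝ, 0 < r → ∀ p, f (r • p) = r ^ 2 * f p) :
    ∫ p, f p ∂((gaussianReal 0 a).prod (gaussianReal 0 b)) =
      π⁻¹ * ∫ θ in -π..π, f (√(a : ℝ) * cos θ, √(b : ℝ) * sin θ) := by
  rw [integral_gaussianReal_prod_eq_integral_sqrt_mul ha hb,
    integral_gaussianReal_one_prod_eq_integral_density,
    integral_gaussian_density_smul_of_homogeneous fun r hr p => ?_]
  simp only [← hf r hr, Prod.smul_fst, Prod.smul_snd, Prod.smul_mk, smul_eq_mul, mul_left_comm]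

end GaussianPolar

/-- `(x₁ + x₂) σ(x₁) σ'(x₁ + x₂)` for the ReLU `σ`, with `σ'(0) = 1`. -/
noncomputable def reluCrossTerm (p : ℝ × ℝ) : ℝ :=
  (p.1 + p.2) * max p.1 0 * (if 0 ≤ p.1 + p.2 then 1 else 0)

lemma reluCrossTerm_smul {r : ℝ} (hr : 0 < r) (p : ℝ × ℝ) :
    reluCrossTerm (r • p) = r ^ 2 * reluCrossTerm p := by
  have hmax : max (r * p.1) 0 = r * max p.1 0 := by rw [mul_max_of_nonneg _ _ hr.le, mul_zero]
  simp only [reluCrossTerm, Prod.smul_fst, Prod.smul_snd, smul_eq_mul, ← mul_add, hmax,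
    mul_nonneg_iff_of_pos_left hr]
  ring

lemma mul_cos_add_mul_sin_eq {α β : ℝ} (hβ : 0 < β) (θ : ℝ) :
    α * cos θ + β * sin θ = β * √(1 + (α / β) ^ 2) * sin (θ + arctan (α / β)) := by
  have : 0 < √(1 + (α / β) ^ 2) := by positivity
  rw [sin_add, sin_arctan, cos_arctan]
  field_simp
  ring

lemma reluCrossTerm_cos_sin {α β θ : ℝ} (hα : 0 < α) (hβ : 0 < β) (hθ : θ ∈ Icc (-π) π) :
    reluCrossTerm (α * cos θ, β * sin θ) =
      indicator (Icc (-arctan (α / β)) (π / 2))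
        (fun θ ↦ α ^ 2 * cos θ ^ 2 + α * β * (sin θ * cos θ)) θ := by
  set φ := arctan (α / β)
  have hφ : 0 < φ := arctan_pos.mpr (by positivity)
  have hφ' : φ < π / 2 := arctan_lt_pi_div_two _
  have hsum := mul_cos_add_mul_sin_eq (α := α) hβ θ
  have hscale : 0 < β * √(1 + (α / β) ^ 2) := by positivity
  obtain ⟨hθ₁, hθ₂⟩ := hθ
  simp only [reluCrossTerm]
  by_cases hlow : θ < -φ
  · have : sin (θ + φ) < 0 := sin_neg_of_neg_of_neg_pi_lt (by linarith) (by linarith)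
    rw [if_neg (by nlinarith), indicator_of_notMem (fun h => by linarith [h.1]), mul_zero]
  by_cases hhigh : π / 2 < θ
  · have : cos θ < 0 := cos_neg_of_pi_div_two_lt_of_lt hhigh (by linarith)
    rw [max_eq_right (by nlinarith), indicator_of_notMem (fun h => by linarith [h.2]),
      mul_zero, zero_mul]
  · have hcos : 0 ≤ cos θ := cos_nonneg_of_mem_Icc ⟨by linarith, by linarith⟩
    have : 0 ≤ sin (θ + φ) := sin_nonneg_of_nonneg_of_le_pi (by linarith) (by linarith)
    rw [if_pos (by nlinarith), max_eq_left (by positivity),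
      indicator_of_mem (show θ ∈ Icc (-φ) (π / 2) from ⟨by linarith, by linarith⟩)]
    ring

lemma integral_reluCrossTerm_cos_sin {α β : ℝ} (hα : 0 < α) (hβ : 0 < β) :
    ∫ θ in -π..π, reluCrossTerm (α * cos θ, β * sin θ) =
      π * α ^ 2 / 4 + α ^ 2 * arctan (α / β) / 2 + α * β / 2 := by
  set φ := arctan (α / β)
  have hφ : 0 < φ := arctan_pos.mpr (by positivity)
  have hφ' : φ < π / 2 := arctan_lt_pi_div_two _
  have hsector : ∫ θ in -π..π, reluCrossTerm (α * cos θ, β * sin θ) =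
      ∫ θ in -φ..π / 2, (α ^ 2 * cos θ ^ 2 + α * β * (sin θ * cos θ)) := by
    rw [intervalIntegral.integral_of_le (by linarith [pi_pos]),
      intervalIntegral.integral_of_le (by linarith),
      setIntegral_congr_fun measurableSet_Ioc fun θ hθ =>
        reluCrossTerm_cos_sin hα hβ (Ioc_subset_Icc_self hθ),
      integral_indicator measurableSet_Icc, Measure.restrict_restrict measurableSet_Icc,
      inter_eq_left.mpr (Icc_subset_Ioc (by linarith) (by linarith [pi_pos])),
      integral_Icc_eq_integral_Ioc]
  have hsq : √(1 + (α / β) ^ 2) ^ 2 = 1 + (α / β) ^ 2 := sq_sqrt (by positivity)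
  have hcs : cos φ * sin φ = α * β / (α ^ 2 + β ^ 2) := by
    rw [cos_arctan, sin_arctan, div_mul_div_comm, one_mul, ← sq, hsq]
    field_simp
    ring
  have hc2 : cos φ ^ 2 = β ^ 2 / (α ^ 2 + β ^ 2) := by
    rw [cos_arctan, div_pow, hsq]
    field_simp
    ring
  rw [hsector, intervalIntegral.integral_add (Continuous.intervalIntegrable (by fun_prop) _ _)
    (Continuous.intervalIntegrable (by fun_prop) _ _), intervalIntegral.integral_const_mul,
    intervalIntegral.integral_const_mul, integral_cos_sq, integral_sin_mul_cos₁]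
  simp only [cos_pi_div_two, sin_pi_div_two, cos_neg, sin_neg, mul_neg, sub_neg_eq_add, neg_sq,
    sin_sq, hcs, hc2]
  field_simp
  ring

theorem gaussian_F3_moment (a b : ℝ≥0) (ha : 0 < a) (hb : 0 < b) :
    ∫ p : ℝ × ℝ,
        (p.1 + p.2) * max p.1 0 * (if 0 ≤ p.1 + p.2 then (1:ℝ) else 0)
        ∂((gaussianReal 0 a).prod (gaussianReal 0 b))
      = (a : ℝ) / 4 +
          ((a : ℝ) / (2 * Real.pi)) * Real.arctan (Real.sqrt ((a : ℝ) / (b : ℝ))) +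
          Real.sqrt ((a : ℝ) * (b : ℝ)) / (2 * Real.pi) := by
  have hα : 0 < √(a : ℝ) := sqrt_pos.mpr (by exact_mod_cast ha)
  have hβ : 0 < √(b : ℝ) := sqrt_pos.mpr (by exact_mod_cast hb)
  change ∫ p, reluCrossTerm p ∂_ = _
  rw [integral_gaussianReal_prod_of_homogeneous ha.ne' hb.ne'
    fun _ => reluCrossTerm_smul,
    integral_reluCrossTerm_cos_sin hα hβ, sq_sqrt a.coe_nonneg, ← sqrt_div' _ b.coe_nonneg,
    ← sqrt_mul a.coe_nonneg]
  field_simp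
end

section
/- Let x₁ ~ N(0,a), x₂ ~ N(0,b), x₃ ~ N(0,c) be independent centered Gaussians, and σ the Leaky ReLU with slope κ. Then E[x₂·σ(x₁)·σ'(x₁+x₂+x₃)] = (1−κ)²·b·√(a(b+c))/(2π(a+b+c)). -/
/-!
With `σ` the leaky ReLU and `φ_v` the centred Gaussian density of variance `v`, integrate out
`x₂`, then `x₃`, then `x₁`. Since `y σ'(s + y) = κ y + (1 - κ) y 1_{y ≥ -s}` and `-v φ_v` is a
primitive of `y φ_v(y)`, `E[x₂ σ'(s + x₂)] = (1 - κ) b φ_b(s)`. Averaging `φ_b(x₁ + x₃)` over `x₃`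
gives `φ_{b+c}(x₁)`. Finally `φ_a φ_{b+c} = φ_{a+b+c}(0) φ_v` with `v = a(b+c)/(a+b+c)`, and
`E_v[σ] = (1 - κ) v φ_v(0)` by the first step at `s = 0`, because `σ(x) = x σ'(x)`.
-/

open MeasureTheory ProbabilityTheory Real Filter Set Topology
open scoped NNReal

namespace ProbabilityTheory

variable {μ : ℝ} {v : ℝ≥0}

lemma integrable_id_gaussianReal : Integrable (fun x => x) (gaussianReal μ v) :=
  (memLp_id_gaussianReal 1).integrable le_rfl

lemma gaussianPDFReal_self : gaussianPDFReal μ v μ = (√(2 * π * v))⁻¹ := by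
  simp [gaussianPDFReal_def]

lemma gaussianPDFReal_zero_neg (x : ℝ) : gaussianPDFReal 0 v (-x) = gaussianPDFReal 0 v x := by
  simp [gaussianPDFReal_def]

lemma hasDerivAt_gaussianPDFReal (x : ℝ) :
    HasDerivAt (gaussianPDFReal μ v) (-((x - μ) / v) * gaussianPDFReal μ v x) x := by
  have h : HasDerivAt (fun y : ℝ => -(y - μ) ^ 2 / (2 * v)) (-((x - μ) / v)) x :=
    ((((hasDerivAt_id x).sub_const μ).pow 2).neg.div_const (2 * (v : ℝ))).congr_deriv
      (by simp only [id, Nat.cast_ofNat]; ring)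
  rw [gaussianPDFReal_def]
  exact (h.exp.const_mul (√(2 * π * v))⁻¹).congr_deriv (by ring)

lemma tendsto_gaussianPDFReal_atTop (hv : v ≠ 0) :
    Tendsto (gaussianPDFReal μ v) atTop (𝓝 0) := by
  have hv' : (0 : ℝ) < 2 * v := by have := pos_iff_ne_zero.2 hv; positivity
  have h : Tendsto (fun y : ℝ => -(y - μ) ^ 2 / (2 * v)) atTop atBot := by
    have hsq := (tendsto_pow_atTop two_ne_zero).comp
      (tendsto_atTop_add_const_right _ (-μ) tendsto_id)
    refine (tendsto_neg_atTop_atBot.comp hsq).atBot_div_const hv' |>.congr fun y => ?_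
    simp [sub_eq_add_neg, neg_div]
  simpa [gaussianPDFReal_def] using (tendsto_exp_atBot.comp h).const_mul (√(2 * π * v))⁻¹

lemma integrable_sub_mul_gaussianPDFReal :
    Integrable (fun y => (y - μ) * gaussianPDFReal μ v y) := by
  rcases eq_or_ne v 0 with rfl | hv
  · simp
  have hv' : 0 < (2 * (v : ℝ))⁻¹ := by have := pos_iff_ne_zero.2 hv; positivity
  refine (((integrable_mul_exp_neg_mul_sq hv').comp_sub_right μ).const_mul
    (√(2 * π * v))⁻¹).congr (ae_of_all _ fun y => ?_)
  simp only [gaussianPDFReal_def, neg_mul, ← neg_div, inv_mul_eq_div]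
  ring

lemma setIntegral_Ioi_sub_mul_gaussianPDFReal (hv : v ≠ 0) (t : ℝ) :
    ∫ y in Ioi t, (y - μ) * gaussianPDFReal μ v y = v * gaussianPDFReal μ v t := by
  have hderiv (y : ℝ) (_ : y ∈ Ici t) :
      HasDerivAt (fun y => -(v * gaussianPDFReal μ v y)) ((y - μ) * gaussianPDFReal μ v y) y :=
    ((hasDerivAt_gaussianPDFReal y).const_mul (v : ℝ)).neg.congr_deriv (by field_simp)
  have hlim := ((tendsto_gaussianPDFReal_atTop (μ := μ) hv).const_mul (v : ℝ)).neg
  rw [mul_zero, neg_zero] at hlim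
  rw [integral_Ioi_of_hasDerivAt_of_tendsto' hderiv integrable_sub_mul_gaussianPDFReal.integrableOn
    hlim, zero_sub, neg_neg]

lemma integral_indicator_Ici_sub_gaussianReal (hv : v ≠ 0) (t : ℝ) :
    ∫ y, (Ici t).indicator (fun y => y - μ) y ∂gaussianReal μ v = v * gaussianPDFReal μ v t := by
  rw [integral_gaussianReal_eq_integral_smul hv]
  simp_rw [smul_eq_mul, ← indicator_mul_right]
  rw [integral_indicator measurableSet_Ici, integral_Ici_eq_integral_Ioi,
    ← setIntegral_Ioi_sub_mul_gaussianPDFReal hv]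
  simp_rw [mul_comm]

lemma gaussianPDFReal_mul_gaussianPDFReal {μ₁ μ₂ : ℝ} {v₁ v₂ : ℝ≥0} (hv₁ : v₁ ≠ 0)
    (hv₂ : v₂ ≠ 0) (x : ℝ) :
    gaussianPDFReal μ₁ v₁ x * gaussianPDFReal μ₂ v₂ x =
      gaussianPDFReal μ₁ (v₁ + v₂) μ₂ *
        gaussianPDFReal ((μ₁ * v₂ + μ₂ * v₁) / (v₁ + v₂)) (v₁ * v₂ / (v₁ + v₂)) x := by
  have h₁ : (0 : ℝ) < v₁ := by have := pos_iff_ne_zero.2 hv₁; positivity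
  have h₂ : (0 : ℝ) < v₂ := by have := pos_iff_ne_zero.2 hv₂; positivity
  have hsqrt : √(2 * π * v₁) * √(2 * π * v₂) =
      √(2 * π * (v₁ + v₂)) * √(2 * π * (v₁ * v₂ / (v₁ + v₂))) := by
    rw [← sqrt_mul (by positivity), ← sqrt_mul (by positivity)]
    congr 1
    field_simp
  simp only [gaussianPDFReal_def, NNReal.coe_add, NNReal.coe_div, NNReal.coe_mul]
  rw [mul_mul_mul_comm, ← exp_add, mul_mul_mul_comm, ← exp_add, ← mul_inv, ← mul_inv, hsqrt]
  congr 2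
  field_simp
  ring

lemma integral_mul_gaussianPDFReal_gaussianReal {μ₁ μ₂ : ℝ} {v₁ v₂ : ℝ≥0} (hv₁ : v₁ ≠ 0)
    (hv₂ : v₂ ≠ 0) (f : ℝ → ℝ) :
    ∫ x, f x * gaussianPDFReal μ₂ v₂ x ∂gaussianReal μ₁ v₁ =
      gaussianPDFReal μ₁ (v₁ + v₂) μ₂ *
        ∫ x, f x ∂gaussianReal ((μ₁ * v₂ + μ₂ * v₁) / (v₁ + v₂)) (v₁ * v₂ / (v₁ + v₂)) := by
  have hv : v₁ * v₂ / (v₁ + v₂) ≠ 0 := by positivity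
  simp_rw [integral_gaussianReal_eq_integral_smul hv₁, integral_gaussianReal_eq_integral_smul hv,
    smul_eq_mul, ← integral_const_mul]
  congr 1 with x
  rw [mul_left_comm, gaussianPDFReal_mul_gaussianPDFReal hv₁ hv₂]
  ring

lemma integral_gaussianPDFReal_add_gaussianReal {v₁ v₂ : ℝ≥0} (hv₁ : v₁ ≠ 0) (hv₂ : v₂ ≠ 0)
    (x : ℝ) :
    ∫ z, gaussianPDFReal 0 v₂ (x + z) ∂gaussianReal 0 v₁ = gaussianPDFReal 0 (v₁ + v₂) x := by
  have h := integral_mul_gaussianPDFReal_gaussianReal (μ₁ := 0) (μ₂ := -x) hv₁ hv₂ fun _ => 1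
  simp only [one_mul, integral_const, probReal_univ, smul_eq_mul, mul_one] at h
  simp_rw [add_comm x, gaussianPDFReal_add, zero_sub, h, gaussianPDFReal_zero_neg]

end ProbabilityTheory

open ProbabilityTheory

noncomputable def leakyReLU (κ x : ℝ) : ℝ := if 0 ≤ x then x else κ * x

noncomputable def leakyReLUDeriv (κ x : ℝ) : ℝ := if 0 ≤ x then 1 else κ

section LeakyReLU

variable (κ : ℝ)

lemma leakyReLU_eq_mul_leakyReLUDeriv (x : ℝ) : leakyReLU κ x = x * leakyReLUDeriv κ x := by
  unfold leakyReLU leakyReLUDeriv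
  split_ifs <;> ring

lemma mul_leakyReLUDeriv_add (s y : ℝ) :
    y * leakyReLUDeriv κ (s + y) = κ * y + (1 - κ) * (Ici (-s)).indicator (fun y => y) y := by
  by_cases h : 0 ≤ s + y
  · rw [leakyReLUDeriv, if_pos h, indicator_of_mem (by simp; linarith)]; ring
  · rw [leakyReLUDeriv, if_neg h, indicator_of_notMem (by simp; linarith)]; ring

lemma measurable_leakyReLUDeriv : Measurable (leakyReLUDeriv κ) :=
  Measurable.ite measurableSet_Ici measurable_const measurable_const

lemma abs_leakyReLUDeriv_le (x : ℝ) : |leakyReLUDeriv κ x| ≤ max 1 |κ| := by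
  unfold leakyReLUDeriv
  split_ifs <;> simp

lemma MeasureTheory.Integrable.mul_leakyReLUDeriv {α : Type*} [MeasurableSpace α]
    {ν : Measure α} {f g : α → ℝ} (hf : Integrable f ν) (hg : Measurable g) :
    Integrable (fun a => f a * leakyReLUDeriv κ (g a)) ν :=
  hf.mul_bdd ((measurable_leakyReLUDeriv κ).comp hg).aestronglyMeasurable
    (ae_of_all _ fun a => abs_leakyReLUDeriv_le κ (g a))

variable {v : ℝ≥0}

lemma integral_mul_leakyReLUDeriv_add_gaussianReal (hv : v ≠ 0) (s : ℝ) :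
    ∫ y, y * leakyReLUDeriv κ (s + y) ∂gaussianReal 0 v = (1 - κ) * v * gaussianPDFReal 0 v s := by
  have hind := integral_indicator_Ici_sub_gaussianReal (μ := 0) hv (-s)
  simp only [sub_zero] at hind
  simp_rw [mul_leakyReLUDeriv_add]
  rw [integral_add (integrable_id_gaussianReal.const_mul κ)
      ((integrable_id_gaussianReal.indicator measurableSet_Ici).const_mul _),
    integral_const_mul, integral_const_mul, integral_id_gaussianReal, hind,
    gaussianPDFReal_zero_neg]
  ring

lemma integral_leakyReLU_gaussianReal (hv : v ≠ 0) :
    ∫ x, leakyReLU κ x ∂gaussianReal 0 v = (1 - κ) * v * gaussianPDFReal 0 v 0 := by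
  simpa [← leakyReLU_eq_mul_leakyReLUDeriv] using
    integral_mul_leakyReLUDeriv_add_gaussianReal κ hv 0

lemma integrable_leakyReLU {ν : Measure ℝ} (h : Integrable (fun x => x) ν) :
    Integrable (leakyReLU κ) ν := by
  simpa [← leakyReLU_eq_mul_leakyReLUDeriv] using h.mul_leakyReLUDeriv κ measurable_id

lemma integral_mul_leakyReLUDeriv_add_add_gaussianReal_prod {b c : ℝ≥0} (hb : b ≠ 0)
    (hc : c ≠ 0) (x : ℝ) :
    ∫ p : ℝ × ℝ, p.1 * leakyReLUDeriv κ (x + p.1 + p.2)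
        ∂(gaussianReal 0 b).prod (gaussianReal 0 c) =
      (1 - κ) * b * gaussianPDFReal 0 (c + b) x := by
  rw [integral_prod_symm _ ((integrable_id_gaussianReal.comp_fst _).mul_leakyReLUDeriv κ
    (by fun_prop))]
  simp_rw [add_right_comm x, integral_mul_leakyReLUDeriv_add_gaussianReal κ hb,
    integral_const_mul, integral_gaussianPDFReal_add_gaussianReal hc hb]

end LeakyReLU

lemma sqrt_two_pi_mul_mul_sqrt_two_pi_mul_div {p q : ℝ} (hp : 0 ≤ p) (hq : 0 < q) :
    √(2 * π * q) * √(2 * π * (p / q)) = 2 * π * √p := by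
  rw [← sqrt_mul (by positivity), sqrt_eq_iff_mul_self_eq (by positivity) (by positivity),
    mul_mul_mul_comm _ √p, mul_self_sqrt hp]
  field_simp

theorem gaussian_F5_leaky_moment (a b c : ℝ≥0) (ha : 0 < a) (hb : 0 < b)
    (hc : 0 < c) (κ : ℝ) :
    ∫ q : ℝ × ℝ × ℝ,
        q.2.1 * (if 0 ≤ q.1 then q.1 else κ * q.1) *
          (if 0 ≤ q.1 + q.2.1 + q.2.2 then (1:ℝ) else κ)
        ∂((gaussianReal 0 a).prod ((gaussianReal 0 b).prod (gaussianReal 0 c)))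
      = (1 - κ) ^ 2 * (b : ℝ) * Real.sqrt ((a : ℝ) * ((b : ℝ) + (c : ℝ))) /
          (2 * Real.pi * ((a : ℝ) + (b : ℝ) + (c : ℝ))) := by
  change ∫ q : ℝ × ℝ × ℝ, q.2.1 * leakyReLU κ q.1 * leakyReLUDeriv κ (q.1 + q.2.1 + q.2.2)
    ∂_ = _
  have hintegrable : Integrable (fun q : ℝ × ℝ × ℝ => q.2.1 * leakyReLU κ q.1)
      ((gaussianReal 0 a).prod ((gaussianReal 0 b).prod (gaussianReal 0 c))) :=
    ((integrable_leakyReLU κ integrable_id_gaussianReal).mul_prod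
      (integrable_id_gaussianReal.comp_fst _)).congr (ae_of_all _ fun _ => mul_comm _ _)
  calc _ = ∫ x, leakyReLU κ x * ∫ p : ℝ × ℝ, p.1 * leakyReLUDeriv κ (x + p.1 + p.2)
          ∂(gaussianReal 0 b).prod (gaussianReal 0 c) ∂gaussianReal 0 a := by
        rw [integral_prod _ (hintegrable.mul_leakyReLUDeriv κ (by fun_prop))]
        congr 1 with x
        rw [← integral_const_mul]
        congr 1 with p
        ring
    _ = (1 - κ) * b * ∫ x, leakyReLU κ x * gaussianPDFReal 0 (c + b) x ∂gaussianReal 0 a := by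
        simp_rw [integral_mul_leakyReLUDeriv_add_add_gaussianReal_prod κ hb.ne' hc.ne',
          ← integral_const_mul]
        congr 1 with x
        ring
    _ = (1 - κ) ^ 2 * b * (a * (c + b) / (a + (c + b))) /
          (√(2 * π * (a + (c + b))) * √(2 * π * (a * (c + b) / (a + (c + b))))) := by
        rw [integral_mul_gaussianPDFReal_gaussianReal ha.ne' (by positivity)]
        simp only [zero_mul, add_zero, zero_div]
        rw [integral_leakyReLU_gaussianReal κ (by positivity), gaussianPDFReal_self,
          gaussianPDFReal_self]
        push_cast
        ring
    _ = _ := by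
        rw [sqrt_two_pi_mul_mul_sqrt_two_pi_mul_div (by positivity) (by positivity), ← div_sqrt,
          add_comm (c : ℝ)]
        field_simp
        ring
end
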